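/- arXiv:math/0211262 — 5 statements merged into one kernel-verified Lean document; each statement's English description precedes it below -/
import Mathlib

section
/- Let θ < θ' be real numbers and g₁, g₂ ∈ SL(2,ℤ) with rk(g₁,θ) > 0, rk(g₂,θ) > 0, and deg(g₂g₁⁻¹) > 0. Then it is impossible that rk(g₁,θ') > 0 and rk(g₂,θ') < 0. (Equivalently, only the sign patterns (+,+), (−,+), (−,−) for (rk(g₁,θ'), rk(g₂,θ')) may occur.) -/
/-!
Both `rk(g,θ)` and `deg(g₂g₁⁻¹)` are 2×2 determinants in the bottom rows `(c,d)` of the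
matrices, which gives the identity
`rk(g₂,θ') rk(g₁,θ) - rk(g₂,θ) rk(g₁,θ') = (θ' - θ) deg(g₂g₁⁻¹)`.
Under the hypotheses the right side is positive, while the sign pattern `(+,-)` at `θ'`
makes the left side negative.
-/

noncomputable section

/-- The lower-left entry of `g ∈ SL(2,ℤ)`. -/
def sl2Deg (g : Matrix.SpecialLinearGroup (Fin 2) ℤ) : ℤ := g.1 1 0

/-- `rk(g,θ) = cθ + d` where `(c,d)` is the bottom row of `g`. -/
def sl2Rk (g : Matrix.SpecialLinearGroup (Fin 2) ℤ) (θ : ℝ) : ℝ :=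
  (g.1 1 0 : ℝ) * θ + (g.1 1 1 : ℝ)

/-- The fractional-linear action `gθ = (aθ+b)/(cθ+d)`. -/
def sl2Act (g : Matrix.SpecialLinearGroup (Fin 2) ℤ) (θ : ℝ) : ℝ :=
  ((g.1 0 0 : ℝ) * θ + (g.1 0 1 : ℝ)) / ((g.1 1 0 : ℝ) * θ + (g.1 1 1 : ℝ))

theorem sl2Deg_mul_inv (g₁ g₂ : Matrix.SpecialLinearGroup (Fin 2) ℤ) :
    sl2Deg (g₂ * g₁⁻¹) = g₂.1 1 0 * g₁.1 1 1 - g₁.1 1 0 * g₂.1 1 1 := by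
  simp only [sl2Deg, Matrix.SpecialLinearGroup.coe_mul, Matrix.SpecialLinearGroup.coe_inv,
    Matrix.adjugate_fin_two, Matrix.mul_apply, Matrix.of_apply, Matrix.cons_val',
    Matrix.cons_val_zero, Matrix.cons_val_one, Matrix.cons_val_fin_one, Fin.sum_univ_two]
  ring

theorem sl2Rk_mul_sl2Rk_sub (g₁ g₂ : Matrix.SpecialLinearGroup (Fin 2) ℤ) (θ θ' : ℝ) :
    sl2Rk g₂ θ' * sl2Rk g₁ θ - sl2Rk g₂ θ * sl2Rk g₁ θ' =
      (θ' - θ) * sl2Deg (g₂ * g₁⁻¹) := by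
  rw [sl2Deg_mul_inv]
  push_cast
  simp only [sl2Rk]
  ring

/-- If `θ < θ'`, `rk(g₁,θ) > 0`, `rk(g₂,θ) > 0` and `deg(g₂g₁⁻¹) > 0`, then
it is impossible that `rk(g₁,θ') > 0` and `rk(g₂,θ') < 0`. -/
theorem stmt4 (θ θ' : ℝ) (hlt : θ < θ')
    (g₁ g₂ : Matrix.SpecialLinearGroup (Fin 2) ℤ)
    (h₁ : 0 < sl2Rk g₁ θ) (h₂ : 0 < sl2Rk g₂ θ)
    (hdeg : 0 < sl2Deg (g₂ * g₁⁻¹)) :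
    ¬ (0 < sl2Rk g₁ θ' ∧ sl2Rk g₂ θ' < 0) := by
  rintro ⟨h₁', h₂'⟩
  have lhs_neg : sl2Rk g₂ θ' * sl2Rk g₁ θ - sl2Rk g₂ θ * sl2Rk g₁ θ' < 0 :=
    sub_neg_of_lt ((mul_neg_of_neg_of_pos h₂' h₁).trans (mul_pos h₂ h₁'))
  have rhs_pos : 0 < (θ' - θ) * (sl2Deg (g₂ * g₁⁻¹) : ℝ) :=
    mul_pos (sub_pos.2 hlt) (by exact_mod_cast hdeg)
  rw [sl2Rk_mul_sl2Rk_sub] at lhs_neg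
  exact lhs_neg.not_gt rhs_pos

end
end

section
/- For a > 0, the operator T(f) = f' + ax·f : S(ℝ, ℂ) → S(ℝ, ℂ) is surjective: for every g in the Schwartz space there exists f in the Schwartz space with f'(x) + ax f(x) = g(x) for all x. -/
noncomputable section
open Real MeasureTheory intervalIntegral
open scoped ContDiff

namespace Stmt7Aux

def pre (a : ℝ) (g : ℝ → ℂ) (x : ℝ) : ℂ :=
  ∫ t in (0:ℝ)..x, Real.exp (a*t^2/2) • g t

def sol (a : ℝ) (g : ℝ → ℂ) (x : ℝ) : ℂ :=
  Real.exp (-(a*x^2/2)) • pre a g x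

lemma pre_hasDerivAt (a : ℝ) {g : ℝ → ℂ} (hg : Continuous g) (x : ℝ) :
    HasDerivAt (pre a g) (Real.exp (a*x^2/2) • g x) x := by
  exact (Continuous.integral_hasStrictDerivAt
    (by fun_prop) 0 x).hasDerivAt

lemma expfac_hasDerivAt (a x : ℝ) :
    HasDerivAt (fun x => Real.exp (-(a*x^2/2))) (-(a*x) * Real.exp (-(a*x^2/2))) x := by
  have h : HasDerivAt (fun x : ℝ => -(a*x^2/2)) (-(a*x)) x := by
    have := ((hasDerivAt_pow 2 x).const_mul a).div_const 2 |>.neg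
    exact this.congr_deriv (by ring)
  exact ((Real.hasDerivAt_exp _).comp x h).congr_deriv (by ring)

lemma sol_hasDerivAt (a : ℝ) {g : ℝ → ℂ} (hg : Continuous g) (x : ℝ) :
    HasDerivAt (sol a g) (g x - (a*x) • sol a g x) x := by
  have h := (expfac_hasDerivAt a x).smul (pre_hasDerivAt a hg x)
  have e : Real.exp (-(a*x^2/2)) • Real.exp (a*x^2/2) = (1:ℝ) := by
    rw [smul_eq_mul, ← Real.exp_add]; ring_nf; exact Real.exp_zero
  refine h.congr_deriv ?_
  have e2 : Real.exp (-(a*x^2/2)) * Real.exp (a*x^2/2) = (1:ℝ) := by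
    rw [← Real.exp_add]; ring_nf; exact Real.exp_zero
  rw [smul_smul, e2, one_smul]
  simp [sol, smul_smul, sub_eq_add_neg, neg_mul]
  ring


lemma pre_smooth (a : ℝ) {g : ℝ → ℂ} (hg : ContDiff ℝ ∞ g) :
    ContDiff ℝ ∞ (pre a g) := by
  rw [contDiff_infty_iff_deriv]
  constructor
  · exact fun x => (pre_hasDerivAt a hg.continuous x).differentiableAt
  · have : deriv (pre a g) = fun x => Real.exp (a*x^2/2) • g x := by
      funext x; exact (pre_hasDerivAt a hg.continuous x).deriv
    rw [this]
    exact (Real.contDiff_exp.comp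
      (((contDiff_const.mul (contDiff_id.pow 2)).div_const 2))).smul hg

lemma sol_smooth (a : ℝ) {g : ℝ → ℂ} (hg : ContDiff ℝ ∞ g) :
    ContDiff ℝ ∞ (sol a g) :=
  ((Real.contDiff_exp.comp
    (((contDiff_const.mul (contDiff_id.pow 2)).div_const 2).neg)).smul (pre_smooth a hg))

lemma sol_neg (a : ℝ) (g : ℝ → ℂ) (y : ℝ) :
    sol a g (-y) = - sol a (fun t => g (-t)) y := by
  unfold sol pre
  have h1 : (∫ t in (0:ℝ)..y, Real.exp (a*t^2/2) • g (-t)) =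
      ∫ t in (-y)..(0:ℝ), Real.exp (a*t^2/2) • g t := by
    have := intervalIntegral.integral_comp_neg (a := (0:ℝ)) (b := y)
      (fun t => Real.exp (a*t^2/2) • g t)
    simpa [neg_sq] using this
  rw [h1, intervalIntegral.integral_symm, neg_sq, smul_neg]


lemma pow_mul_exp_le (a : ℝ) (ha : 0 < a) (k : ℕ) {s : ℝ} (hs : 0 ≤ s) :
    s^k * Real.exp (-(a*s/2)) ≤ (k.factorial : ℝ) * (2/a)^k := by
  rw [Real.exp_neg, mul_inv_le_iff₀ (Real.exp_pos _)]
  have h := Real.pow_div_factorial_le_exp (x := a*s/2) (by positivity) k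
  have h2 : (a*s/2)^k ≤ (k.factorial : ℝ) * Real.exp (a*s/2) := by
    rw [div_le_iff₀ (by positivity)] at h
    nlinarith [h]
  calc s^k = (2/a)^k * (a*s/2)^k := by
        rw [← mul_pow]; congr 1; field_simp
    _ ≤ (2/a)^k * ((k.factorial:ℝ) * Real.exp (a*s/2)) :=
        mul_le_mul_of_nonneg_left h2 (by positivity)
    _ = (k.factorial:ℝ) * (2/a)^k * Real.exp (a*s/2) := by ring

lemma onesided (a : ℝ) (ha : 0 < a) (g : ℝ → ℂ) (hg : Continuous g)
    (hB : ∀ m : ℕ, ∃ B, ∀ x, |x| ^ m * ‖g x‖ ≤ B) (k : ℕ) :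
    ∃ C, ∀ x : ℝ, 0 ≤ x → x ^ k * ‖sol a g x‖ ≤ C := by
  obtain ⟨M0, hM0⟩ := hB 0
  obtain ⟨M2, hM2⟩ := hB 2
  obtain ⟨Mk, hMk⟩ := hB k
  have hM0' : ∀ x, ‖g x‖ ≤ M0 := fun x => by simpa using hM0 x
  have hM0nn : 0 ≤ M0 := (norm_nonneg _).trans (hM0' 0)
  have hM2nn : 0 ≤ M2 := le_trans (by positivity) (hM2 1)
  have hMknn : 0 ≤ Mk := le_trans (by positivity) (hMk 1)
  obtain ⟨Ak, hAk⟩ : ∃ c : ℝ, c = (k.factorial : ℝ) * (2/a)^k := ⟨_, rfl⟩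
  have hAknn : 0 ≤ Ak := by rw [hAk]; positivity
  have hcontE : Continuous fun t : ℝ => Real.exp (a*t^2/2) * ‖g t‖ := by
    exact (Real.continuous_exp.comp (by fun_prop)).mul hg.norm
  have key : ∀ x : ℝ, 0 ≤ x → ‖sol a g x‖ ≤
      Real.exp (-(a*x^2/2)) * ∫ t in (0:ℝ)..x, Real.exp (a*t^2/2) * ‖g t‖ := by
    intro x hx
    rw [sol, norm_smul, Real.norm_eq_abs, Real.abs_exp]
    gcongr
    calc ‖pre a g x‖ ≤ ∫ t in (0:ℝ)..x, ‖Real.exp (a*t^2/2) • g t‖ :=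
          intervalIntegral.norm_integral_le_integral_norm hx
      _ = ∫ t in (0:ℝ)..x, Real.exp (a*t^2/2) * ‖g t‖ := by
          congr 1; funext t; rw [norm_smul, Real.norm_eq_abs, Real.abs_exp]
  refine ⟨max (Real.exp (a/2) * M0) (2^k * (Ak * (M0+M2)) * 2 + 2^k * Mk * (2/a)), ?_⟩
  intro x hx
  rcases le_total x 1 with hx1 | hx1
  · refine le_trans ?_ (le_max_left _ _)
    have hxk : x^k ≤ 1 := pow_le_one₀ hx hx1
    have h1 : ‖sol a g x‖ ≤ Real.exp (a/2) * M0 := by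
      refine (key x hx).trans ?_
      have hexp : Real.exp (-(a*x^2/2)) ≤ 1 := by
        rw [Real.exp_le_one_iff]; nlinarith
      have hint : (∫ t in (0:ℝ)..x, Real.exp (a*t^2/2) * ‖g t‖) ≤ Real.exp (a/2) * M0 := by
        have hmono : (∫ t in (0:ℝ)..x, Real.exp (a*t^2/2) * ‖g t‖) ≤
            ∫ _t in (0:ℝ)..x, Real.exp (a/2) * M0 := by
          apply intervalIntegral.integral_mono_on hx (hcontE.intervalIntegrable _ _)
            intervalIntegrable_const
          intro t ht
          have ht2 : t^2 ≤ 1 := by nlinarith [ht.1, ht.2]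
          have he : Real.exp (a*t^2/2) ≤ Real.exp (a/2) := by
            apply Real.exp_le_exp.2; nlinarith
          exact mul_le_mul he (hM0' t) (norm_nonneg _) (Real.exp_pos _).le
        rw [intervalIntegral.integral_const, sub_zero, smul_eq_mul] at hmono
        refine hmono.trans ?_
        nlinarith [Real.exp_pos (a/2), mul_le_mul_of_nonneg_right hx1
          (mul_nonneg (Real.exp_pos (a/2)).le hM0nn)]
      have hInn : (0:ℝ) ≤ ∫ t in (0:ℝ)..x, Real.exp (a*t^2/2) * ‖g t‖ := by
        apply intervalIntegral.integral_nonneg hx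
        intro t _; positivity
      nlinarith [Real.exp_pos (-(a*x^2/2))]
    calc x^k * ‖sol a g x‖ ≤ 1 * (Real.exp (a/2) * M0) :=
          mul_le_mul hxk h1 (norm_nonneg _) zero_le_one
      _ = _ := one_mul _
  · refine le_trans ?_ (le_max_right _ _)
    obtain ⟨c1, hc1⟩ : ∃ c : ℝ, c = 2^k * (Ak * (M0+M2)) := ⟨_, rfl⟩
    obtain ⟨c2, hc2⟩ : ∃ c : ℝ, c = 2^k * Mk * Real.exp (-(a*x/2)) := ⟨_, rfl⟩
    have hc1nn : 0 ≤ c1 := by rw [hc1]; positivity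
    have hc2nn : 0 ≤ c2 := by rw [hc2]; positivity
    have hcont1 : Continuous fun t : ℝ => c1 * (1/(1+t^2)) + c2 * Real.exp (a*t/2) := by
      apply Continuous.add
      · exact continuous_const.mul (continuous_const.div (by fun_prop)
          (fun t => by positivity))
      · exact continuous_const.mul (Real.continuous_exp.comp (by fun_prop))
    have h2 : x^k * ‖sol a g x‖ ≤
        ∫ t in (0:ℝ)..x, (c1 * (1/(1+t^2)) + c2 * Real.exp (a*t/2)) := by
      calc x^k * ‖sol a g x‖
          ≤ x^k * (Real.exp (-(a*x^2/2)) * ∫ t in (0:ℝ)..x, Real.exp (a*t^2/2) * ‖g t‖) :=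
            mul_le_mul_of_nonneg_left (key x hx) (by positivity)
        _ = ∫ t in (0:ℝ)..x, x^k * Real.exp (-(a*x^2/2)) * (Real.exp (a*t^2/2) * ‖g t‖) := by
            rw [intervalIntegral.integral_const_mul]; ring
        _ ≤ _ := by
            apply intervalIntegral.integral_mono_on hx
              (((continuous_const.mul hcontE).intervalIntegrable _ _))
              (hcont1.intervalIntegrable _ _)
            rintro t ⟨ht0, htx⟩
            have e1 : Real.exp (-(a*x^2/2)) * Real.exp (a*t^2/2) ≤
                Real.exp (-(a*x*(x-t)/2)) := by
              rw [← Real.exp_add]; apply Real.exp_le_exp.2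
              nlinarith [mul_nonneg (mul_nonneg ha.le ht0) (sub_nonneg.2 htx)]
            have e2 : x^k ≤ 2^k * ((x-t)^k + t^k) := by
              have hxle : x ≤ 2 * max (x-t) t := by
                rcases le_total (x-t) t with h|h
                · rw [max_eq_right h]; linarith
                · rw [max_eq_left h]; linarith
              calc x^k ≤ (2 * max (x-t) t)^k := pow_le_pow_left₀ hx hxle k
                _ = 2^k * (max (x-t) t)^k := mul_pow _ _ _
                _ ≤ 2^k * ((x-t)^k + t^k) := by
                    apply mul_le_mul_of_nonneg_left _ (by positivity)
                    rcases le_total (x-t) t with h|h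
                    · rw [max_eq_right h]
                      exact le_add_of_nonneg_left (pow_nonneg (by linarith) k)
                    · rw [max_eq_left h]
                      exact le_add_of_nonneg_right (pow_nonneg ht0 k)
            have expAB : Real.exp (-(a*x*(x-t)/2)) ≤ Real.exp (-(a*(x-t)/2)) := by
              apply Real.exp_le_exp.2
              nlinarith [mul_nonneg (mul_nonneg ha.le (sub_nonneg.2 hx1)) (sub_nonneg.2 htx)]
            have termA : (x-t)^k * (Real.exp (-(a*x*(x-t)/2)) * ‖g t‖) ≤
                Ak * (M0+M2) * (1/(1+t^2)) := by
              have hgt : ‖g t‖ ≤ (M0+M2) * (1/(1+t^2)) := by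
                rw [mul_one_div, le_div_iff₀ (by positivity : (0:ℝ) < 1+t^2)]
                have := hM2 t
                rw [sq_abs] at this
                nlinarith [hM0' t, norm_nonneg (g t)]
              have hA : (x-t)^k * Real.exp (-(a*x*(x-t)/2)) ≤ Ak := by
                rw [hAk]
                refine le_trans ?_ (pow_mul_exp_le a ha k (s := x - t) (by linarith))
                exact mul_le_mul_of_nonneg_left expAB (pow_nonneg (by linarith) k)
              calc (x-t)^k * (Real.exp (-(a*x*(x-t)/2)) * ‖g t‖)
                  = ((x-t)^k * Real.exp (-(a*x*(x-t)/2))) * ‖g t‖ := by ring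
                _ ≤ Ak * ((M0+M2) * (1/(1+t^2))) :=
                    mul_le_mul hA hgt (norm_nonneg _) hAknn
                _ = Ak * (M0+M2) * (1/(1+t^2)) := by ring
            have termB : t^k * (Real.exp (-(a*x*(x-t)/2)) * ‖g t‖) ≤
                Mk * (Real.exp (-(a*x/2)) * Real.exp (a*t/2)) := by
              have hsplit : Real.exp (-(a*(x-t)/2)) =
                  Real.exp (-(a*x/2)) * Real.exp (a*t/2) := by
                rw [← Real.exp_add]; congr 1; ring
              have htk : t^k * ‖g t‖ ≤ Mk := by
                have := hMk t
                rwa [abs_of_nonneg ht0] at this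
              calc t^k * (Real.exp (-(a*x*(x-t)/2)) * ‖g t‖)
                  = (t^k * ‖g t‖) * Real.exp (-(a*x*(x-t)/2)) := by ring
                _ ≤ Mk * Real.exp (-(a*(x-t)/2)) := by
                    apply mul_le_mul htk expAB (Real.exp_pos _).le hMknn
                _ = Mk * (Real.exp (-(a*x/2)) * Real.exp (a*t/2)) := by rw [hsplit]
            calc x^k * Real.exp (-(a*x^2/2)) * (Real.exp (a*t^2/2) * ‖g t‖)
                = x^k * ((Real.exp (-(a*x^2/2)) * Real.exp (a*t^2/2)) * ‖g t‖) := by ring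
              _ ≤ x^k * (Real.exp (-(a*x*(x-t)/2)) * ‖g t‖) := by
                  apply mul_le_mul_of_nonneg_left _ (pow_nonneg hx k)
                  exact mul_le_mul_of_nonneg_right e1 (norm_nonneg _)
              _ ≤ (2^k * ((x-t)^k + t^k)) * (Real.exp (-(a*x*(x-t)/2)) * ‖g t‖) :=
                  mul_le_mul_of_nonneg_right e2 (by positivity)
              _ = 2^k * ((x-t)^k * (Real.exp (-(a*x*(x-t)/2)) * ‖g t‖)
                    + t^k * (Real.exp (-(a*x*(x-t)/2)) * ‖g t‖)) := by ring
              _ ≤ 2^k * (Ak * (M0+M2) * (1/(1+t^2))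
                    + Mk * (Real.exp (-(a*x/2)) * Real.exp (a*t/2))) := by
                  apply mul_le_mul_of_nonneg_left (add_le_add termA termB) (by positivity)
              _ = c1 * (1/(1+t^2)) + c2 * Real.exp (a*t/2) := by rw [hc1, hc2]; ring
    have hIexp : (∫ t in (0:ℝ)..x, Real.exp (a*t/2)) = (2/a) * (Real.exp (a*x/2) - 1) := by
      have harg : ∀ t : ℝ, a*t/2 = (a/2)*t := fun t => by ring
      calc (∫ t in (0:ℝ)..x, Real.exp (a*t/2))
          = ∫ t in (0:ℝ)..x, Real.exp ((a/2)*t) := by simp_rw [harg]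
        _ = (a/2)⁻¹ • ∫ t in ((a/2)*0)..((a/2)*x), Real.exp t :=
            integral_comp_mul_left Real.exp (by positivity)
        _ = (2/a) * (Real.exp (a*x/2) - 1) := by
            rw [integral_exp, smul_eq_mul, mul_zero, Real.exp_zero]
            rw [show ((a/2)⁻¹ : ℝ) = 2/a by rw [inv_div]]
            congr 2
            ring
    have hIatan : (∫ t in (0:ℝ)..x, (1:ℝ)/(1+t^2)) = Real.arctan x := by
      rw [integral_one_div_one_add_sq, Real.arctan_zero, sub_zero]
    have hcontA : Continuous fun t : ℝ => c1 * (1/(1+t^2)) :=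
      continuous_const.mul (continuous_const.div
        (continuous_const.add (continuous_pow 2)) (fun t => by positivity))
    have hcontB : Continuous fun t : ℝ => c2 * Real.exp (a*t/2) :=
      continuous_const.mul (Real.continuous_exp.comp
        ((continuous_const.mul continuous_id).div_const 2))
    have hsplitInt : (∫ t in (0:ℝ)..x, (c1 * (1/(1+t^2)) + c2 * Real.exp (a*t/2)))
        = c1 * Real.arctan x + c2 * ((2/a) * (Real.exp (a*x/2) - 1)) := by
      rw [intervalIntegral.integral_add
        (hcontA.intervalIntegrable _ _) (hcontB.intervalIntegrable _ _),
        intervalIntegral.integral_const_mul, intervalIntegral.integral_const_mul,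
        hIexp, hIatan]
    have hfinal : c1 * Real.arctan x + c2 * ((2/a) * (Real.exp (a*x/2) - 1))
        ≤ c1 * 2 + 2^k * Mk * (2/a) := by
      have ha1 : Real.arctan x ≤ 2 := by
        have := (Real.arctan_lt_pi_div_two x).le
        nlinarith [Real.pi_le_four]
      have hb1 : c2 * ((2/a) * (Real.exp (a*x/2) - 1)) ≤ 2^k * Mk * (2/a) := by
        rw [hc2]
        have hu : Real.exp (-(a*x/2)) * (Real.exp (a*x/2) - 1) ≤ 1 := by
          rw [mul_sub, ← Real.exp_add]
          simp only [neg_add_cancel, Real.exp_zero]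
          nlinarith [Real.exp_pos (-(a*x/2))]
        calc 2^k * Mk * Real.exp (-(a*x/2)) * ((2/a) * (Real.exp (a*x/2) - 1))
            = (2^k * Mk * (2/a)) * (Real.exp (-(a*x/2)) * (Real.exp (a*x/2) - 1)) := by ring
          _ ≤ (2^k * Mk * (2/a)) * 1 := by
              apply mul_le_mul_of_nonneg_left hu (by positivity)
          _ = 2^k * Mk * (2/a) := mul_one _
      have hb2 : c1 * Real.arctan x ≤ c1 * 2 :=
        mul_le_mul_of_nonneg_left ha1 hc1nn
      linarith
    rw [hsplitInt] at h2
    refine (h2.trans hfinal).trans ?_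
    rw [hc1]


lemma sol_decay (a : ℝ) (ha : 0 < a) (g : ℝ → ℂ) (hg : Continuous g)
    (hB : ∀ m : ℕ, ∃ B, ∀ x, |x| ^ m * ‖g x‖ ≤ B) (k : ℕ) :
    ∃ C, ∀ x : ℝ, |x| ^ k * ‖sol a g x‖ ≤ C := by
  obtain ⟨C1, hC1⟩ := onesided a ha g hg hB k
  obtain ⟨C2, hC2⟩ := onesided a ha (fun t => g (-t)) (hg.comp continuous_neg)
    (fun m => (hB m).imp (fun B hBm x => by simpa using hBm (-x))) k
  refine ⟨max C1 C2, fun x => ?_⟩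
  rcases le_total 0 x with hx | hx
  · rw [abs_of_nonneg hx]; exact (hC1 x hx).trans (le_max_left _ _)
  · have h : sol a g x = - sol a (fun t => g (-t)) (-x) := by
      have := sol_neg a g (-x)
      rwa [neg_neg] at this
    rw [abs_of_nonpos hx, h, norm_neg]
    exact (hC2 (-x) (by linarith)).trans (le_max_right _ _)

lemma hasDerivAt_iteratedDeriv {f : ℝ → ℂ} (hf : ContDiff ℝ ∞ f) (m : ℕ) (x : ℝ) :
    HasDerivAt (iteratedDeriv m f) (iteratedDeriv (m+1) f x) x := by
  have hd : Differentiable ℝ (iteratedDeriv m f) :=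
    ContDiff.differentiable_iteratedDeriv' m (hf.of_le (by exact_mod_cast le_top))
  have := (hd x).hasDerivAt
  rwa [← iteratedDeriv_succ] at this

lemma iteratedDeriv_sol_one (a : ℝ) {g : ℝ → ℂ} (hg : ContDiff ℝ ∞ g) (x : ℝ) :
    iteratedDeriv 1 (sol a g) x = g x - (a:ℂ) * x * sol a g x := by
  rw [iteratedDeriv_one, (sol_hasDerivAt a hg.continuous x).deriv]
  rw [Complex.real_smul]
  push_cast
  ring

lemma iteratedDeriv_sol_succ (a : ℝ) {g : ℝ → ℂ} (hg : ContDiff ℝ ∞ g) (n : ℕ) (x : ℝ) :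
    iteratedDeriv (n+2) (sol a g) x =
      iteratedDeriv (n+1) g x - (a:ℂ) * x * iteratedDeriv (n+1) (sol a g) x
        - (a:ℂ) * (n+1) * iteratedDeriv n (sol a g) x := by
  have hf := sol_smooth a hg
  have hx : ∀ y : ℝ, HasDerivAt (fun y : ℝ => ((y : ℂ))) 1 y := fun y => by
    simpa using (hasDerivAt_id y).ofReal_comp
  induction n generalizing x with
  | zero =>
    have hEq : iteratedDeriv 1 (sol a g) = fun x => g x - (a:ℂ)*x*sol a g x :=
      funext (iteratedDeriv_sol_one a hg)
    have h1 : HasDerivAt g (iteratedDeriv 1 g x) x := by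
      have := hasDerivAt_iteratedDeriv hg 0 x
      rwa [iteratedDeriv_zero] at this
    have h2 : HasDerivAt (sol a g) (iteratedDeriv 1 (sol a g) x) x := by
      have := hasDerivAt_iteratedDeriv hf 0 x
      rwa [iteratedDeriv_zero] at this
    have h3 := ((hx x).const_mul (a:ℂ)).mul h2
    have hder : HasDerivAt (fun x : ℝ => g x - (a:ℂ)*x*sol a g x)
        (iteratedDeriv 1 g x - ((a:ℂ)*1*sol a g x + (a:ℂ)*x*iteratedDeriv 1 (sol a g) x)) x := by
      exact h1.sub h3
      try ring
    conv_lhs => rw [show (0:ℕ)+2 = 1+1 from rfl, iteratedDeriv_succ, hEq]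
    rw [hder.deriv, iteratedDeriv_zero]
    push_cast
    ring
  | succ m ih =>
    have hEq : iteratedDeriv (m+2) (sol a g) = fun x =>
        iteratedDeriv (m+1) g x - (a:ℂ) * x * iteratedDeriv (m+1) (sol a g) x
          - (a:ℂ) * (m+1) * iteratedDeriv m (sol a g) x :=
      funext (fun x => ih x)
    have h1 := hasDerivAt_iteratedDeriv hg (m+1) x
    have h2 := hasDerivAt_iteratedDeriv hf (m+1) x
    have h3 := ((hx x).const_mul (a:ℂ)).mul h2
    have h4 := (hasDerivAt_iteratedDeriv hf m x).const_mul ((a:ℂ)*(m+1))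
    have hder : HasDerivAt (fun x : ℝ =>
        iteratedDeriv (m+1) g x - (a:ℂ) * x * iteratedDeriv (m+1) (sol a g) x
          - (a:ℂ) * (m+1) * iteratedDeriv m (sol a g) x)
        (iteratedDeriv (m+2) g x
          - ((a:ℂ)*1*iteratedDeriv (m+1) (sol a g) x + (a:ℂ)*x*iteratedDeriv (m+2) (sol a g) x)
          - (a:ℂ)*(m+1)*iteratedDeriv (m+1) (sol a g) x) x := by
      exact (h1.sub h3).sub h4
    conv_lhs => rw [show m+1+2 = (m+2)+1 from rfl, iteratedDeriv_succ, hEq]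
    rw [hder.deriv]
    have e : m+1+1 = m+2 := rfl
    rw [e]
    push_cast
    ring

lemma sol_deriv_decay (a : ℝ) (ha : 0 < a) (g : SchwartzMap ℝ ℂ) :
    ∀ n k : ℕ, ∃ C, ∀ x : ℝ, |x| ^ k * ‖iteratedDeriv n (sol a ⇑g) x‖ ≤ C := by
  have hg : ContDiff ℝ ∞ (⇑g) := g.smooth ⊤
  have hB : ∀ m : ℕ, ∃ B, ∀ x, |x| ^ m * ‖g x‖ ≤ B := fun m =>
    ⟨SchwartzMap.seminorm ℝ m 0 g, fun x => by
      have h := SchwartzMap.le_seminorm' ℝ m 0 g x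
      rwa [iteratedDeriv_zero] at h⟩
  have key : ∀ n : ℕ,
      (∀ k : ℕ, ∃ C, ∀ x : ℝ, |x| ^ k * ‖iteratedDeriv n (sol a ⇑g) x‖ ≤ C) ∧
      (∀ k : ℕ, ∃ C, ∀ x : ℝ, |x| ^ k * ‖iteratedDeriv (n+1) (sol a ⇑g) x‖ ≤ C) := by
    intro n
    induction n with
    | zero =>
      constructor
      · intro k
        obtain ⟨C, hC⟩ := sol_decay a ha (⇑g) g.continuous hB k
        exact ⟨C, fun x => by simpa [iteratedDeriv_zero] using hC x⟩
      · intro k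
        obtain ⟨C0, hC0⟩ := sol_decay a ha (⇑g) g.continuous hB (k+1)
        obtain ⟨Bk, hBk⟩ := hB k
        refine ⟨Bk + |a| * C0, fun x => ?_⟩
        rw [iteratedDeriv_sol_one a hg x]
        have hn : ‖g x - (a:ℂ)*x*sol a ⇑g x‖ ≤ ‖g x‖ + |a| * |x| * ‖sol a ⇑g x‖ := by
          refine (norm_sub_le _ _).trans ?_
          have : ‖(a:ℂ)*x*sol a ⇑g x‖ = |a| * |x| * ‖sol a ⇑g x‖ := by
            simp [norm_mul, Complex.norm_real]
          rw [this]
        calc |x|^k * ‖g x - (a:ℂ)*x*sol a ⇑g x‖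
            ≤ |x|^k * (‖g x‖ + |a| * |x| * ‖sol a ⇑g x‖) :=
              mul_le_mul_of_nonneg_left hn (by positivity)
          _ = |x|^k * ‖g x‖ + |a| * (|x|^(k+1) * ‖sol a ⇑g x‖) := by ring
          _ ≤ Bk + |a| * C0 := by
              have h1 := hBk x
              have h2 := mul_le_mul_of_nonneg_left (hC0 x) (abs_nonneg a)
              linarith
    | succ m ih =>
      obtain ⟨ihm, ihm1⟩ := ih
      refine ⟨ihm1, fun k => ?_⟩
      obtain ⟨C1, hC1⟩ := ihm1 (k+1)
      obtain ⟨C2, hC2⟩ := ihm k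
      refine ⟨SchwartzMap.seminorm ℝ k (m+1) g + |a| * C1 + (|a| * (m+1)) * C2,
        fun x => ?_⟩
      rw [iteratedDeriv_sol_succ a hg m x]
      have hn : ‖iteratedDeriv (m+1) (⇑g) x - (a:ℂ)*x*iteratedDeriv (m+1) (sol a ⇑g) x
            - (a:ℂ)*(m+1)*iteratedDeriv m (sol a ⇑g) x‖
          ≤ ‖iteratedDeriv (m+1) (⇑g) x‖ + |a| * |x| * ‖iteratedDeriv (m+1) (sol a ⇑g) x‖
            + |a| * (m+1) * ‖iteratedDeriv m (sol a ⇑g) x‖ := by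
        refine (norm_sub_le _ _).trans ?_
        have e1 : ‖(a:ℂ)*x*iteratedDeriv (m+1) (sol a ⇑g) x‖
            = |a| * |x| * ‖iteratedDeriv (m+1) (sol a ⇑g) x‖ := by
          simp [norm_mul, Complex.norm_real]
        have e2 : ‖(a:ℂ)*(m+1)*iteratedDeriv m (sol a ⇑g) x‖
            = |a| * (m+1) * ‖iteratedDeriv m (sol a ⇑g) x‖ := by
          have : ‖((m:ℂ)+1)‖ = ((m:ℝ)+1) := by
            rw [show ((m:ℂ)+1) = (((m:ℝ)+1 : ℝ) : ℂ) by push_cast; ring]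
            rw [Complex.norm_real, Real.norm_eq_abs, abs_of_nonneg (by positivity)]
          simp [norm_mul, Complex.norm_real, this]
        rw [e2]
        have h' := (norm_sub_le (iteratedDeriv (m+1) (⇑g) x)
          ((a:ℂ)*x*iteratedDeriv (m+1) (sol a ⇑g) x))
        rw [e1] at h'
        linarith
      calc |x|^k * ‖iteratedDeriv (m+1) (⇑g) x - (a:ℂ)*x*iteratedDeriv (m+1) (sol a ⇑g) x
              - (a:ℂ)*(m+1)*iteratedDeriv m (sol a ⇑g) x‖
          ≤ |x|^k * (‖iteratedDeriv (m+1) (⇑g) x‖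
              + |a| * |x| * ‖iteratedDeriv (m+1) (sol a ⇑g) x‖
              + |a| * (m+1) * ‖iteratedDeriv m (sol a ⇑g) x‖) :=
            mul_le_mul_of_nonneg_left hn (by positivity)
        _ = |x|^k * ‖iteratedDeriv (m+1) (⇑g) x‖
              + |a| * (|x|^(k+1) * ‖iteratedDeriv (m+1) (sol a ⇑g) x‖)
              + (|a| * (m+1)) * (|x|^k * ‖iteratedDeriv m (sol a ⇑g) x‖) := by ring
        _ ≤ SchwartzMap.seminorm ℝ k (m+1) g + |a| * C1 + (|a| * (m+1)) * C2 := by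
            have h1 := SchwartzMap.le_seminorm' ℝ k (m+1) g x
            have h2 := mul_le_mul_of_nonneg_left (hC1 x) (abs_nonneg a)
            have h3 := mul_le_mul_of_nonneg_left (hC2 x)
              (by positivity : (0:ℝ) ≤ |a| * (m+1))
            linarith
  exact fun n => (key n).1

end Stmt7Aux

/-- For `a > 0`, the operator `f ↦ f' + ax·f` on the Schwartz space is
surjective. -/
theorem stmt7 (a : ℝ) (ha : 0 < a) (g : SchwartzMap ℝ ℂ) :
    ∃ f : SchwartzMap ℝ ℂ,
      ∀ x : ℝ, deriv (⇑f) x + (a : ℂ) * (x : ℂ) * f x = g x := by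
  have hg : ContDiff ℝ ∞ (⇑g) := g.smooth ⊤
  refine ⟨⟨Stmt7Aux.sol a ⇑g, Stmt7Aux.sol_smooth a hg, ?_⟩, ?_⟩
  · intro k n
    obtain ⟨C, hC⟩ := Stmt7Aux.sol_deriv_decay a ha g n k
    exact ⟨C, fun x => by
      rw [norm_iteratedFDeriv_eq_norm_iteratedDeriv, Real.norm_eq_abs]
      exact hC x⟩
  · intro x
    show deriv (Stmt7Aux.sol a ⇑g) x + (a:ℂ)*x*(Stmt7Aux.sol a ⇑g x) = g x
    rw [(Stmt7Aux.sol_hasDerivAt a g.continuous x).deriv, Complex.real_smul]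
    push_cast
    ring

end
end

section
/- For a < 0, the cokernel of the operator T(f) = f' + ax·f on the Schwartz space S(ℝ, ℂ) is one-dimensional. Precisely: a Schwartz function g lies in the image of T if and only if ∫_ℝ exp(ax²/2) g(x) dx = 0. -/
noncomputable section

open MeasureTheory Filter Set

namespace Stmt8Aux

/-- The weight function. -/
def W (a : ℝ) (x : ℝ) : ℂ := Complex.exp ((a : ℂ) * (x : ℂ) ^ 2 / 2)

lemma norm_W (a x : ℝ) : ‖W a x‖ = Real.exp (a * x ^ 2 / 2) := by
  rw [W, show ((a:ℂ) * (x:ℂ)^2/2) = ((a*x^2/2 : ℝ) : ℂ) by push_cast; ring,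
    Complex.norm_exp, Complex.ofReal_re]

lemma norm_W_le_one {a : ℝ} (ha : a < 0) (x : ℝ) : ‖W a x‖ ≤ 1 := by
  rw [norm_W, Real.exp_le_one_iff]
  nlinarith [sq_nonneg x]

lemma continuous_W (a : ℝ) : Continuous (W a) := by
  unfold W; fun_prop

lemma hasDerivAt_W (a : ℝ) (x : ℝ) : HasDerivAt (W a) ((a:ℂ) * (x:ℂ) * W a x) x := by
  have h1 : HasDerivAt (fun z : ℂ => (a:ℂ) * z ^ 2 / 2) ((a:ℂ) * (x:ℂ)) (x:ℝ) := by
    simpa [mul_comm, mul_assoc, mul_div_assoc] using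
      (((hasDerivAt_pow 2 ((x:ℝ):ℂ)).const_mul ((a:ℂ))).div_const 2)
  have h2 := h1.cexp
  have h3 := h2.comp_ofReal
  convert h3 using 1
  · rfl
  · simp only [W]; ring

lemma integrable_W_mul {a : ℝ} (ha : a < 0) (g : SchwartzMap ℝ ℂ) :
    Integrable (fun x => W a x * g x) := by
  exact g.integrable.bdd_mul (continuous_W a).aestronglyMeasurable (Eventually.of_forall (norm_W_le_one ha))

lemma tendsto_W_mul_cocompact {a : ℝ} (ha : a < 0) (f : SchwartzMap ℝ ℂ) :
    Tendsto (fun x => W a x * f x) (cocompact ℝ) (nhds 0) := by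
  have h0 : Tendsto (⇑f) (cocompact ℝ) (nhds 0) := by
    have := zero_at_infty f.toZeroAtInfty
    simpa [funext (SchwartzMap.toZeroAtInfty_apply f)] using this
  have hf : Tendsto (fun x => ‖f x‖) (cocompact ℝ) (nhds 0) :=
    tendsto_zero_iff_norm_tendsto_zero.mp h0
  refine squeeze_zero_norm (fun x => ?_) hf
  rw [norm_mul]
  calc ‖W a x‖ * ‖f x‖ ≤ 1 * ‖f x‖ := by
        gcongr; exact norm_W_le_one ha x
    _ = ‖f x‖ := one_mul _

lemma forward {a : ℝ} (ha : a < 0) (f g : SchwartzMap ℝ ℂ)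
    (hfg : ∀ x : ℝ, deriv (⇑f) x + (a : ℂ) * (x : ℂ) * f x = g x) :
    ∫ x : ℝ, W a x * g x = 0 := by
  set h : ℝ → ℂ := fun x => W a x * f x with hh
  have hderiv : ∀ x : ℝ, HasDerivAt h (W a x * g x) x := by
    intro x
    have hd := (hasDerivAt_W a x).mul (f.differentiableAt.hasDerivAt)
    have : (a:ℂ) * (x:ℂ) * W a x * f x + W a x * deriv (⇑f) x = W a x * g x := by
      rw [← hfg x]; ring
    rw [← this]; exact hd
  have hint := integrable_W_mul ha g
  have hcc := tendsto_W_mul_cocompact ha f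
  have htop : Tendsto h atTop (nhds 0) :=
    hcc.mono_left (by rw [cocompact_eq_atBot_atTop]; exact le_sup_right)
  have hbot : Tendsto h atBot (nhds 0) :=
    hcc.mono_left (by rw [cocompact_eq_atBot_atTop]; exact le_sup_left)
  have h1 : ∫ x in Iic (0:ℝ), W a x * g x = h 0 - 0 :=
    integral_Iic_of_hasDerivAt_of_tendsto' (fun x _ => hderiv x) hint.integrableOn hbot
  have h2 : ∫ x in Ioi (0:ℝ), W a x * g x = 0 - h 0 :=
    integral_Ioi_of_hasDerivAt_of_tendsto' (fun x _ => hderiv x) hint.integrableOn htop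
  rw [← intervalIntegral.integral_Iic_add_Ioi (b := (0:ℝ)) hint.integrableOn hint.integrableOn, h1, h2]
  ring

/-- the bump function giving a nonzero functional value -/
def bump : ContDiffBump (0:ℝ) := ⟨1, 2, one_pos, one_lt_two⟩

lemma bump_smooth : ContDiff ℝ (⊤ : ℕ∞) (fun x : ℝ => ((bump x : ℝ) : ℂ)) :=
  Complex.ofRealCLM.contDiff.comp bump.contDiff

lemma bump_compact : HasCompactSupport (fun x : ℝ => ((bump x : ℝ) : ℂ)) := by
  have := bump.hasCompactSupport
  exact this.comp_left (g := fun r : ℝ => (r : ℂ)) (by simp)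

def g0 : SchwartzMap ℝ ℂ where
  toFun := fun x : ℝ => ((bump x : ℝ) : ℂ)
  smooth' := bump_smooth
  decay' := by
    intro k n
    have hc : Continuous fun x : ℝ => ‖x‖ ^ k * ‖iteratedFDeriv ℝ n (fun x : ℝ => ((bump x : ℝ) : ℂ)) x‖ := by
      apply Continuous.mul (by fun_prop)
      exact (bump_smooth.continuous_iteratedFDeriv (by exact_mod_cast le_top)).norm
    have hsupp : HasCompactSupport fun x : ℝ =>
        ‖x‖ ^ k * ‖iteratedFDeriv ℝ n (fun x : ℝ => ((bump x : ℝ) : ℂ)) x‖ := by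
      exact ((bump_compact.iteratedFDeriv n).norm).mul_left
    obtain ⟨C, hC⟩ := hc.bounded_above_of_compact_support hsupp
    exact ⟨C, fun x => (Real.le_norm_self _).trans (hC x)⟩

lemma integral_g0 {a : ℝ} (ha : a < 0) : ∫ x : ℝ, W a x * g0 x ≠ 0 := by
  have hre : ∀ x : ℝ, W a x * g0 x = ((Real.exp (a * x ^ 2 / 2) * bump x : ℝ) : ℂ) := by
    intro x
    have : W a x = ((Real.exp (a*x^2/2) : ℝ) : ℂ) := by
      rw [W, show ((a:ℂ) * (x:ℂ)^2/2) = ((a*x^2/2 : ℝ) : ℂ) by push_cast; ring,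
        Complex.ofReal_exp]
    rw [this]; push_cast [g0]; rfl
  rw [show (fun x : ℝ => W a x * g0 x) = fun x : ℝ => ((Real.exp (a*x^2/2) * bump x : ℝ) : ℂ) from funext hre]
  have hor : (∫ x : ℝ, ((Real.exp (a*x^2/2) * bump x : ℝ) : ℂ)) = ((∫ x : ℝ, Real.exp (a*x^2/2) * bump x : ℝ) : ℂ) := integral_ofReal
  rw [hor, Ne, Complex.ofReal_eq_zero]
  have hnn : 0 ≤ fun x : ℝ => Real.exp (a*x^2/2) * bump x :=
    fun x => mul_nonneg (Real.exp_pos _).le bump.nonneg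
  have hint : Integrable (fun x : ℝ => Real.exp (a*x^2/2) * bump x) := by
    apply Continuous.integrable_of_hasCompactSupport
    · exact (Real.continuous_exp.comp (by fun_prop)).mul bump.continuous
    · exact bump.hasCompactSupport.mul_left
  have hpos : 0 < ∫ x : ℝ, Real.exp (a*x^2/2) * bump x := by
    rw [integral_pos_iff_support_of_nonneg hnn hint]
    have hsub : Metric.ball (0:ℝ) 1 ⊆ Function.support fun x : ℝ => Real.exp (a*x^2/2) * bump x := by
      intro x hx
      have h1 : bump x = 1 := bump.one_of_mem_closedBall (Metric.ball_subset_closedBall hx)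
      simp only [Function.mem_support, h1, mul_one]
      exact (Real.exp_pos _).ne'
    calc (0:ENNReal) < volume (Metric.ball (0:ℝ) 1) := Metric.measure_ball_pos _ _ one_pos
      _ ≤ _ := measure_mono hsub
  exact hpos.ne'

end Stmt8Aux

namespace Stmt8Aux2

lemma hasDerivAt_coe (x : ℝ) : HasDerivAt (fun x : ℝ => ((x : ℝ) : ℂ)) 1 x := by
  simpa using (hasDerivAt_id x).ofReal_comp

lemma diff_iteratedDeriv {u : ℝ → ℂ} (hu : ContDiff ℝ (⊤ : ℕ∞) u) (m : ℕ) :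
    Differentiable ℝ (iteratedDeriv m u) := by
  apply hu.differentiable_iteratedDeriv
  exact_mod_cast WithTop.coe_lt_coe.mpr (WithTop.coe_lt_top m)

lemma iteratedDeriv_mul_x {u : ℝ → ℂ} (hu : ContDiff ℝ (⊤ : ℕ∞) u) (n : ℕ) :
    iteratedDeriv (n+1) (fun x : ℝ => (x : ℂ) * u x) =
      fun x : ℝ => (x : ℂ) * iteratedDeriv (n+1) u x + ((n : ℂ)+1) * iteratedDeriv n u x := by
  induction n with
  | zero =>
      rw [iteratedDeriv_one]
      funext x
      have hd : HasDerivAt (fun x : ℝ => (x : ℂ) * u x)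
          (1 * u x + (x : ℂ) * deriv u x) x :=
        (hasDerivAt_coe x).mul ((diff_iteratedDeriv hu 0 x).hasDerivAt.congr_deriv (by
          simp [iteratedDeriv_zero]) |>.congr_of_eventuallyEq (by simp [iteratedDeriv_zero]))
      rw [hd.deriv, iteratedDeriv_one, iteratedDeriv_zero]
      ring
  | succ n ih =>
      rw [iteratedDeriv_succ, ih]
      funext x
      have h1 : HasDerivAt (fun x : ℝ => (x : ℂ) * iteratedDeriv (n+1) u x)
          (1 * iteratedDeriv (n+1) u x + (x : ℂ) * iteratedDeriv (n+2) u x) x := by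
        have := (hasDerivAt_coe x).mul ((diff_iteratedDeriv hu (n+1)) x).hasDerivAt
        rwa [← iteratedDeriv_succ] at this
      have h2 : HasDerivAt (fun x : ℝ => ((n : ℂ)+1) * iteratedDeriv n u x)
          (((n : ℂ)+1) * iteratedDeriv (n+1) u x) x := by
        have := (((diff_iteratedDeriv hu n) x).hasDerivAt).const_mul ((n : ℂ)+1)
        rwa [← iteratedDeriv_succ] at this
      have := (h1.add h2).deriv
      rw [Pi.add_def] at this
      rw [this, iteratedDeriv_succ (n := n+1)]
      push_cast
      ring

end Stmt8Aux2

namespace Stmt8Aux3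
open Stmt8Aux2

variable {a : ℝ}

lemma hasDerivAt_rexp_q (a t : ℝ) :
    HasDerivAt (fun t : ℝ => Real.exp (a*t^2/2)) (a * t * Real.exp (a*t^2/2)) t := by
  have h1 : HasDerivAt (fun t : ℝ => a*t^2/2) (a*t) t := by
    simpa [mul_comm, mul_assoc, mul_div_assoc] using ((hasDerivAt_pow 2 t).const_mul a).div_const 2
  simpa [mul_comm] using h1.exp

lemma tendsto_q_atBot (ha : a < 0) : Tendsto (fun t : ℝ => a*t^2/2) atTop atBot := by
  have h1 : Tendsto (fun t : ℝ => t^2) atTop atTop := tendsto_pow_atTop two_ne_zero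
  have h2 : Tendsto (fun t : ℝ => a*t^2) atTop atBot := h1.const_mul_atTop_of_neg ha
  exact h2.atBot_div_const two_pos

lemma tendsto_q_atBot' (ha : a < 0) : Tendsto (fun t : ℝ => a*t^2) atBot atBot → True := fun _ => trivial

lemma tendsto_q_atBot'' (ha : a < 0) : Tendsto (fun t : ℝ => a*t^2/2) atBot atBot := by
  have h1 : Tendsto (fun t : ℝ => t^2) atBot atTop := by
    have := (tendsto_id : Tendsto (fun t:ℝ => t) atBot atBot).atBot_mul_atBot₀ (tendsto_id : Tendsto (fun t:ℝ => t) atBot atBot)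
    simpa [← sq] using this
  have h2 : Tendsto (fun t : ℝ => a*t^2) atBot atBot := h1.const_mul_atTop_of_neg ha
  exact h2.atBot_div_const two_pos

lemma tendsto_rexp_top (ha : a < 0) :
    Tendsto (fun t : ℝ => Real.exp (a*t^2/2)) atTop (nhds 0) :=
  Real.tendsto_exp_atBot.comp (tendsto_q_atBot ha)

lemma tendsto_rexp_bot (ha : a < 0) :
    Tendsto (fun t : ℝ => Real.exp (a*t^2/2)) atBot (nhds 0) :=
  Real.tendsto_exp_atBot.comp (tendsto_q_atBot'' ha)

lemma integrable_t_exp (ha : a < 0) : Integrable (fun t : ℝ => t * Real.exp (a*t^2/2)) := by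
  have := integrable_mul_exp_neg_mul_sq (b := -a/2) (by linarith)
  convert this using 2 with t
  ring_nf

lemma tail_Ioi (ha : a < 0) (x : ℝ) :
    ∫ t in Ioi x, t * Real.exp (a*t^2/2) = Real.exp (a*x^2/2)/(-a) := by
  have hφ : ∀ t : ℝ, HasDerivAt (fun t : ℝ => Real.exp (a*t^2/2)/a)
      (t * Real.exp (a*t^2/2)) t := by
    intro t
    have ha' : a ≠ 0 := ne_of_lt ha
    have h := (hasDerivAt_rexp_q a t).div_const a
    have he : a*t*Real.exp (a*t^2/2)/a = t * Real.exp (a*t^2/2) := by field_simp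
    rwa [he] at h
  have htend : Tendsto (fun t : ℝ => Real.exp (a*t^2/2)/a) atTop (nhds 0) := by
    simpa using (tendsto_rexp_top ha).div_const a
  rw [integral_Ioi_of_hasDerivAt_of_tendsto' (fun t _ => hφ t)
    (integrable_t_exp ha).integrableOn htend]
  rw [zero_sub, div_neg]

lemma tail_Iic (ha : a < 0) (x : ℝ) :
    ∫ t in Iic x, (-t) * Real.exp (a*t^2/2) = Real.exp (a*x^2/2)/(-a) := by
  have hφ : ∀ t : ℝ, HasDerivAt (fun t : ℝ => Real.exp (a*t^2/2)/(-a))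
      ((-t) * Real.exp (a*t^2/2)) t := by
    intro t
    have ha' : a ≠ 0 := ne_of_lt ha
    have h := (hasDerivAt_rexp_q a t).div_const (-a)
    have he : a*t*Real.exp (a*t^2/2)/(-a) = (-t) * Real.exp (a*t^2/2) := by
      rw [div_neg, show a*t*Real.exp (a*t^2/2)/a = t*Real.exp (a*t^2/2) from by field_simp]
      ring
    rwa [he] at h
  have htend : Tendsto (fun t : ℝ => Real.exp (a*t^2/2)/(-a)) atBot (nhds 0) := by
    simpa using (tendsto_rexp_bot ha).div_const (-a)
  have hint : Integrable (fun t : ℝ => (-t) * Real.exp (a*t^2/2)) := by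
    exact (integrable_t_exp ha).neg.congr (Eventually.of_forall fun t => by simp)
  rw [integral_Iic_of_hasDerivAt_of_tendsto' (fun t _ => hφ t) hint.integrableOn htend]
  simp

end Stmt8Aux3

namespace Stmt8Back
open Stmt8Aux Stmt8Aux2 Stmt8Aux3

variable {a : ℝ}

/-- Antiderivative of the weighted function. -/
def F (a : ℝ) (g : SchwartzMap ℝ ℂ) (x : ℝ) : ℂ := ∫ t in Iic x, W a t * g t

/-- The candidate preimage. -/
def f (a : ℝ) (g : SchwartzMap ℝ ℂ) (x : ℝ) : ℂ := W (-a) x * F a g x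

lemma W_mul_W (a x : ℝ) : W (-a) x * W a x = 1 := by
  rw [W, W, ← Complex.exp_add,
    show (((-a:ℝ):ℂ) * (x:ℂ)^2/2 + (a:ℂ) * (x:ℂ)^2/2) = 0 by push_cast; ring,
    Complex.exp_zero]

lemma rexp_mul_rexp (a x : ℝ) : Real.exp ((-a)*x^2/2) * Real.exp (a*x^2/2) = 1 := by
  rw [← Real.exp_add, show (-a)*x^2/2 + a*x^2/2 = 0 by ring, Real.exp_zero]

lemma hasDerivAt_F (ha : a < 0) (g : SchwartzMap ℝ ℂ) (x : ℝ) :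
    HasDerivAt (F a g) (W a x * g x) x := by
  have hint := integrable_W_mul ha g
  have hcont : Continuous (fun t => W a t * g t) := (continuous_W a).mul g.continuous
  have heq : F a g = fun y => (∫ t in Iic (0:ℝ), W a t * g t) + ∫ t in (0:ℝ)..y, W a t * g t := by
    funext y
    rw [← intervalIntegral.integral_Iic_sub_Iic hint.integrableOn hint.integrableOn, F]
    ring
  rw [heq]
  exact (intervalIntegral.integral_hasDerivAt_right (hint.intervalIntegrable)
    (hcont.stronglyMeasurableAtFilter _ _) hcont.continuousAt).const_add _

lemma hasDerivAt_f (ha : a < 0) (g : SchwartzMap ℝ ℂ) (x : ℝ) :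
    HasDerivAt (f a g) (g x - (a:ℂ) * (x:ℂ) * f a g x) x := by
  have h1 := (hasDerivAt_W (-a) x).mul (hasDerivAt_F ha g x)
  have he : ((-a:ℝ):ℂ) * (x:ℂ) * W (-a) x * F a g x + W (-a) x * (W a x * g x)
      = g x - (a:ℂ) * (x:ℂ) * f a g x := by
    simp only [f]
    push_cast
    linear_combination (g x) * (W_mul_W a x)
  rw [← he]
  exact h1

lemma deriv_f (ha : a < 0) (g : SchwartzMap ℝ ℂ) :
    deriv (f a g) = fun x => g x - (a:ℂ) * (x:ℂ) * f a g x :=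
  funext fun x => (hasDerivAt_f ha g x).deriv

lemma ode_f (ha : a < 0) (g : SchwartzMap ℝ ℂ) (x : ℝ) :
    deriv (f a g) x + (a:ℂ) * (x:ℂ) * f a g x = g x := by
  rw [deriv_f ha g]; ring

lemma smooth_f (ha : a < 0) (g : SchwartzMap ℝ ℂ) : ContDiff ℝ (⊤:ℕ∞) (f a g) := by
  rw [contDiff_infty]
  intro n
  induction n with
  | zero =>
      exact contDiff_zero.mpr
        (continuous_iff_continuousAt.mpr fun x => (hasDerivAt_f ha g x).continuousAt)
  | succ n ih =>
      rw [show ((n+1:ℕ) : WithTop ℕ∞) = (n : WithTop ℕ∞) + 1 by push_cast; rfl,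
        contDiff_succ_iff_deriv]
      refine ⟨fun x => (hasDerivAt_f ha g x).differentiableAt, ?_, ?_⟩
      · intro h; simp at h
      · rw [deriv_f ha g]
        have hg : ContDiff ℝ (n : WithTop ℕ∞) (⇑g) := by exact_mod_cast g.smooth n
        exact hg.sub ((contDiff_const.mul Complex.ofRealCLM.contDiff).mul ih)

lemma decay_f_base (ha : a < 0) (g : SchwartzMap ℝ ℂ) (hint : ∫ x : ℝ, W a x * g x = 0)
    (k : ℕ) : ∃ C : ℝ, ∀ x : ℝ, |x| ^ k * ‖f a g x‖ ≤ C := by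
  obtain ⟨C, hC0, hC⟩ := g.decay k 0
  have hCk : ∀ t : ℝ, |t| ^ k * ‖g t‖ ≤ C := by
    intro t
    simpa [norm_iteratedFDeriv_zero, Real.norm_eq_abs] using hC t
  have hwg := integrable_W_mul ha g
  set M : ℝ := ∫ t : ℝ, ‖W a t * g t‖ with hM
  have hFM : ∀ x : ℝ, ‖F a g x‖ ≤ M := by
    intro x
    refine (norm_integral_le_integral_norm _).trans ?_
    exact setIntegral_le_integral hwg.norm (Eventually.of_forall fun t => norm_nonneg _)
  have hnormwg : ∀ t : ℝ, ‖W a t * g t‖ = Real.exp (a*t^2/2) * ‖g t‖ := by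
    intro t; rw [norm_mul, norm_W]
  have hnormf : ∀ x : ℝ, ‖f a g x‖ = Real.exp ((-a)*x^2/2) * ‖F a g x‖ := by
    intro x; rw [f, norm_mul, norm_W]
  -- positive side
  have hpos : ∀ x : ℝ, 1 ≤ x → |x| ^ k * ‖f a g x‖ ≤ C / (-a) := by
    intro x hx
    have hx0 : (0:ℝ) < x := lt_of_lt_of_le one_pos hx
    have hFx : F a g x = - ∫ t in Ioi x, W a t * g t := by
      have h := intervalIntegral.integral_Iic_add_Ioi (b := x) hwg.integrableOn hwg.integrableOn
      rw [hint] at h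
      rw [F]
      linear_combination h
    have hstep : ∫ t in Ioi x, ‖W a t * g t‖
        ≤ ∫ t in Ioi x, C / x^(k+1) * (t * Real.exp (a*t^2/2)) := by
      refine setIntegral_mono_on hwg.norm.integrableOn
        (((integrable_t_exp ha).const_mul _).integrableOn) measurableSet_Ioi ?_
      intro t ht
      have hxt : x ≤ t := le_of_lt ht
      have ht0 : (0:ℝ) < t := lt_of_lt_of_le hx0 hxt
      have hgt : ‖g t‖ ≤ C / x^k := by
        rw [le_div_iff₀ (pow_pos hx0 k), mul_comm]
        calc x^k * ‖g t‖ ≤ |t|^k * ‖g t‖ :=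
              mul_le_mul_of_nonneg_right
                (pow_le_pow_left₀ hx0.le (by rw [abs_of_pos ht0]; exact hxt) k) (norm_nonneg _)
          _ ≤ C := hCk t
      have hexp : Real.exp (a*t^2/2) ≤ (t/x) * Real.exp (a*t^2/2) := by
        refine le_mul_of_one_le_left (Real.exp_pos _).le ?_
        rw [le_div_iff₀ hx0, one_mul]; exact hxt
      calc ‖W a t * g t‖ = Real.exp (a*t^2/2) * ‖g t‖ := hnormwg t
        _ ≤ ((t/x) * Real.exp (a*t^2/2)) * (C / x^k) :=
            mul_le_mul hexp hgt (norm_nonneg _)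
              (mul_nonneg (div_nonneg ht0.le hx0.le) (Real.exp_pos _).le)
        _ = C / x^(k+1) * (t * Real.exp (a*t^2/2)) := by
            rw [pow_succ]
            ring
    have hF : ‖F a g x‖ ≤ C / x^(k+1) * (Real.exp (a*x^2/2) / (-a)) := by
      rw [hFx, norm_neg]
      refine (norm_integral_le_integral_norm _).trans (hstep.trans ?_)
      rw [integral_const_mul, tail_Ioi ha x]
    have hone : Real.exp ((-a)*x^2/2) * Real.exp (a*x^2/2) = 1 := rexp_mul_rexp a x
    have hCnn : (0:ℝ) ≤ C / (-a) := div_nonneg hC0.le (by linarith)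
    calc |x|^k * ‖f a g x‖ = x^k * (Real.exp ((-a)*x^2/2) * ‖F a g x‖) := by
          rw [hnormf, abs_of_pos hx0]
      _ ≤ x^k * (Real.exp ((-a)*x^2/2) * (C / x^(k+1) * (Real.exp (a*x^2/2) / (-a)))) := by
          gcongr
      _ = (C / (-a)) * ((Real.exp ((-a)*x^2/2) * Real.exp (a*x^2/2)) * (x^k / x^(k+1))) := by
          ring
      _ = (C / (-a)) * (1 / x) := by
          rw [hone, one_mul, pow_succ, div_mul_eq_div_div,
            div_self (pow_ne_zero k hx0.ne'), one_div]
      _ ≤ (C / (-a)) * 1 := by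
          gcongr
          · rw [div_le_one hx0]; exact hx
      _ = C / (-a) := mul_one _
  -- negative side
  have hneg : ∀ x : ℝ, x ≤ -1 → |x| ^ k * ‖f a g x‖ ≤ C / (-a) := by
    intro x hx
    have hx0 : x < 0 := lt_of_le_of_lt hx (by norm_num)
    have hmx : (1:ℝ) ≤ -x := by linarith
    have hmx0 : (0:ℝ) < -x := by linarith
    have hstep : ∫ t in Iic x, ‖W a t * g t‖
        ≤ ∫ t in Iic x, C / (-x)^(k+1) * ((-t) * Real.exp (a*t^2/2)) := by
      refine setIntegral_mono_on hwg.norm.integrableOn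
        ((((integrable_t_exp ha).neg.congr (Eventually.of_forall fun t => by
          simp)).const_mul _).integrableOn) measurableSet_Iic ?_
      intro t ht
      have htx : t ≤ x := ht
      have hmt0 : (0:ℝ) < -t := by linarith
      have hgt : ‖g t‖ ≤ C / (-x)^k := by
        rw [le_div_iff₀ (pow_pos hmx0 k), mul_comm]
        calc (-x)^k * ‖g t‖ ≤ |t|^k * ‖g t‖ :=
              mul_le_mul_of_nonneg_right
                (pow_le_pow_left₀ hmx0.le (by rw [abs_of_neg (by linarith : t < 0)]; linarith) k)
                (norm_nonneg _)
          _ ≤ C := hCk t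
      have hexp : Real.exp (a*t^2/2) ≤ ((-t)/(-x)) * Real.exp (a*t^2/2) := by
        refine le_mul_of_one_le_left (Real.exp_pos _).le ?_
        rw [le_div_iff₀ hmx0, one_mul]; linarith
      calc ‖W a t * g t‖ = Real.exp (a*t^2/2) * ‖g t‖ := hnormwg t
        _ ≤ (((-t)/(-x)) * Real.exp (a*t^2/2)) * (C / (-x)^k) :=
            mul_le_mul hexp hgt (norm_nonneg _)
              (mul_nonneg (div_nonneg hmt0.le hmx0.le) (Real.exp_pos _).le)
        _ = C / (-x)^(k+1) * ((-t) * Real.exp (a*t^2/2)) := by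
            rw [pow_succ]
            ring
    have hF : ‖F a g x‖ ≤ C / (-x)^(k+1) * (Real.exp (a*x^2/2) / (-a)) := by
      refine (norm_integral_le_integral_norm _).trans (hstep.trans ?_)
      rw [integral_const_mul, tail_Iic ha x]
    have hone : Real.exp ((-a)*x^2/2) * Real.exp (a*x^2/2) = 1 := rexp_mul_rexp a x
    calc |x|^k * ‖f a g x‖ = (-x)^k * (Real.exp ((-a)*x^2/2) * ‖F a g x‖) := by
          rw [hnormf, abs_of_neg hx0]
      _ ≤ (-x)^k * (Real.exp ((-a)*x^2/2) * (C / (-x)^(k+1) * (Real.exp (a*x^2/2) / (-a)))) := by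
          gcongr
      _ = (C / (-a)) * ((Real.exp ((-a)*x^2/2) * Real.exp (a*x^2/2)) * ((-x)^k / (-x)^(k+1))) := by
          ring
      _ = (C / (-a)) * (1 / (-x)) := by
          rw [hone, one_mul, pow_succ, div_mul_eq_div_div,
            div_self (pow_ne_zero k hmx0.ne'), one_div]
      _ ≤ (C / (-a)) * 1 := by
          gcongr
          · exact div_nonneg hC0.le (by linarith)
          · rw [div_le_one hmx0]; exact hmx
      _ = C / (-a) := mul_one _
  -- middle
  have hmid : ∀ x : ℝ, |x| ≤ 1 → |x| ^ k * ‖f a g x‖ ≤ Real.exp ((-a)/2) * M := by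
    intro x hx
    have h1 : |x|^k ≤ 1 := pow_le_one₀ (abs_nonneg x) hx
    have h2 : Real.exp ((-a)*x^2/2) ≤ Real.exp ((-a)/2) := by
      apply Real.exp_le_exp.mpr
      have hx2 : x^2 ≤ 1 := by nlinarith [sq_abs x, abs_nonneg x]
      nlinarith
    have hMnn : 0 ≤ M := integral_nonneg fun t => norm_nonneg _
    calc |x|^k * ‖f a g x‖ ≤ 1 * ‖f a g x‖ := by
          gcongr
      _ = Real.exp ((-a)*x^2/2) * ‖F a g x‖ := by rw [one_mul, hnormf]
      _ ≤ Real.exp ((-a)/2) * M :=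
          mul_le_mul h2 (hFM x) (norm_nonneg _) (Real.exp_pos _).le
  refine ⟨max (C / (-a)) (Real.exp ((-a)/2) * M), fun x => ?_⟩
  rcases le_or_gt 1 x with h | h
  · exact le_max_of_le_left (hpos x h)
  rcases le_or_gt x (-1) with h' | h'
  · exact le_max_of_le_left (hneg x h')
  · exact le_max_of_le_right (hmid x (abs_le.mpr ⟨h'.le, h.le⟩))

lemma norm_nat_add_one (m : ℕ) : ‖((m:ℂ)+1)‖ = (m:ℝ)+1 := by
  rw [show ((m:ℂ)+1) = (((m:ℝ)+1 : ℝ) : ℂ) by push_cast; rfl, Complex.norm_real,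
    Real.norm_eq_abs, abs_of_nonneg (by positivity)]

lemma decay_f_iter (ha : a < 0) (g : SchwartzMap ℝ ℂ) (hint : ∫ x : ℝ, W a x * g x = 0) :
    ∀ n k : ℕ, ∃ C : ℝ, ∀ x : ℝ, |x| ^ k * ‖iteratedDeriv n (f a g) x‖ ≤ C := by
  intro n
  induction n using Nat.strong_induction_on with
  | _ n IH =>
    rcases n with _ | n
    · intro k
      simpa only [iteratedDeriv_zero] using decay_f_base ha g hint k
    rcases n with _ | m
    · intro k
      obtain ⟨Cg, hCg0, hCg⟩ := g.decay k 0
      obtain ⟨Cf, hCf⟩ := decay_f_base ha g hint (k+1)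
      refine ⟨Cg + |a| * Cf, fun x => ?_⟩
      rw [iteratedDeriv_one, deriv_f ha g]
      calc |x|^k * ‖g x - (a:ℂ)*(x:ℂ)*f a g x‖
          ≤ |x|^k * (‖g x‖ + |a| * |x| * ‖f a g x‖) := by
            gcongr
            calc ‖g x - (a:ℂ)*(x:ℂ)*f a g x‖ ≤ ‖g x‖ + ‖(a:ℂ)*(x:ℂ)*f a g x‖ := norm_sub_le _ _
              _ = ‖g x‖ + |a| * |x| * ‖f a g x‖ := by
                  rw [norm_mul, norm_mul, Complex.norm_real, Complex.norm_real,
                    Real.norm_eq_abs, Real.norm_eq_abs]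
        _ = |x|^k * ‖g x‖ + |a| * (|x|^(k+1) * ‖f a g x‖) := by ring
        _ ≤ Cg + |a| * Cf := by
            have h1 : |x|^k * ‖g x‖ ≤ Cg := by
              simpa [norm_iteratedFDeriv_zero, Real.norm_eq_abs] using hCg x
            exact add_le_add h1 (mul_le_mul_of_nonneg_left (hCf x) (abs_nonneg a))
    · intro k
      have hfsm := smooth_f ha g
      have hu : ContDiff ℝ ((⊤:ℕ∞) : WithTop ℕ∞) (fun x : ℝ => ((x:ℝ):ℂ) * f a g x) :=
        Complex.ofRealCLM.contDiff.mul hfsm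
      have hgj : ContDiff ℝ ((m+1 : ℕ) : WithTop ℕ∞) (⇑g) := by exact_mod_cast g.smooth (m+1)
      have huj : ContDiff ℝ ((m+1 : ℕ) : WithTop ℕ∞)
          ((-(a:ℂ)) • fun x : ℝ => ((x:ℝ):ℂ) * f a g x) :=
        (hu.of_le (by exact_mod_cast le_top)).const_smul (-(a:ℂ))
      have hkey : ∀ x : ℝ, iteratedDeriv (m+2) (f a g) x
          = iteratedDeriv (m+1) (⇑g) x
            + (-(a:ℂ)) * ((x:ℂ) * iteratedDeriv (m+1) (f a g) x
              + ((m:ℂ)+1) * iteratedDeriv m (f a g) x) := by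
        intro x
        have hsplit : deriv (f a g)
            = (⇑g + (-(a:ℂ)) • fun x : ℝ => ((x:ℝ):ℂ) * f a g x) := by
          rw [deriv_f ha g]
          funext y
          simp only [Pi.add_apply, Pi.smul_apply, smul_eq_mul]
          ring
        rw [show m+2 = (m+1)+1 from rfl, iteratedDeriv_succ', hsplit,
          iteratedDeriv_eq_iteratedFDeriv, iteratedFDeriv_add_apply hgj.contDiffAt huj.contDiffAt]
        have h2 : iteratedFDeriv ℝ (m+1) ((-(a:ℂ)) • fun x : ℝ => ((x:ℝ):ℂ) * f a g x) x
            = (-(a:ℂ)) • iteratedFDeriv ℝ (m+1) (fun x : ℝ => ((x:ℝ):ℂ) * f a g x) x :=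
          iteratedFDeriv_const_smul_apply (hu.of_le (by exact_mod_cast le_top) : ContDiff ℝ ((m+1 : ℕ) : WithTop ℕ∞) _).contDiffAt
        rw [ContinuousMultilinearMap.add_apply, h2, ContinuousMultilinearMap.smul_apply,
          ← iteratedDeriv_eq_iteratedFDeriv, ← iteratedDeriv_eq_iteratedFDeriv,
          iteratedDeriv_mul_x hfsm m]
        simp [smul_eq_mul]
      obtain ⟨Cg, hCg0, hCg⟩ := g.decay k (m+1)
      have hCg' : ∀ x : ℝ, |x|^k * ‖iteratedDeriv (m+1) (⇑g) x‖ ≤ Cg := by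
        intro x
        simpa [norm_iteratedFDeriv_eq_norm_iteratedDeriv, Real.norm_eq_abs] using hCg x
      obtain ⟨C1, hC1⟩ := IH (m+1) (by omega) (k+1)
      obtain ⟨C2, hC2⟩ := IH m (by omega) k
      refine ⟨Cg + |a| * (C1 + ((m:ℝ)+1) * C2), fun x => ?_⟩
      rw [hkey x]
      calc |x|^k * ‖iteratedDeriv (m+1) (⇑g) x
            + (-(a:ℂ)) * ((x:ℂ) * iteratedDeriv (m+1) (f a g) x
              + ((m:ℂ)+1) * iteratedDeriv m (f a g) x)‖
          ≤ |x|^k * (‖iteratedDeriv (m+1) (⇑g) x‖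
            + |a| * (|x| * ‖iteratedDeriv (m+1) (f a g) x‖
              + ((m:ℝ)+1) * ‖iteratedDeriv m (f a g) x‖)) := by
            gcongr
            calc ‖iteratedDeriv (m+1) (⇑g) x
                  + (-(a:ℂ)) * ((x:ℂ) * iteratedDeriv (m+1) (f a g) x
                    + ((m:ℂ)+1) * iteratedDeriv m (f a g) x)‖
                ≤ ‖iteratedDeriv (m+1) (⇑g) x‖
                  + ‖(-(a:ℂ)) * ((x:ℂ) * iteratedDeriv (m+1) (f a g) x
                    + ((m:ℂ)+1) * iteratedDeriv m (f a g) x)‖ := norm_add_le _ _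
              _ ≤ ‖iteratedDeriv (m+1) (⇑g) x‖
                  + |a| * (|x| * ‖iteratedDeriv (m+1) (f a g) x‖
                    + ((m:ℝ)+1) * ‖iteratedDeriv m (f a g) x‖) := by
                  gcongr
                  rw [norm_mul, norm_neg, Complex.norm_real, Real.norm_eq_abs]
                  gcongr
                  calc ‖(x:ℂ) * iteratedDeriv (m+1) (f a g) x
                        + ((m:ℂ)+1) * iteratedDeriv m (f a g) x‖
                      ≤ ‖(x:ℂ) * iteratedDeriv (m+1) (f a g) x‖
                        + ‖((m:ℂ)+1) * iteratedDeriv m (f a g) x‖ := norm_add_le _ _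
                    _ = |x| * ‖iteratedDeriv (m+1) (f a g) x‖
                        + ((m:ℝ)+1) * ‖iteratedDeriv m (f a g) x‖ := by
                        rw [norm_mul, norm_mul, Complex.norm_real, Real.norm_eq_abs,
                          norm_nat_add_one]
        _ = |x|^k * ‖iteratedDeriv (m+1) (⇑g) x‖
            + |a| * ((|x|^(k+1) * ‖iteratedDeriv (m+1) (f a g) x‖)
              + ((m:ℝ)+1) * (|x|^k * ‖iteratedDeriv m (f a g) x‖)) := by ring
        _ ≤ Cg + |a| * (C1 + ((m:ℝ)+1) * C2) := by
            refine add_le_add (hCg' x) (mul_le_mul_of_nonneg_left ?_ (abs_nonneg a))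
            exact add_le_add (hC1 x) (mul_le_mul_of_nonneg_left (hC2 x) (by positivity))

/-- The constructed preimage as a Schwartz map. -/
def fS (ha : a < 0) (g : SchwartzMap ℝ ℂ) (hint : ∫ x : ℝ, W a x * g x = 0) :
    SchwartzMap ℝ ℂ where
  toFun := f a g
  smooth' := smooth_f ha g
  decay' := by
    intro k n
    obtain ⟨C, hC⟩ := decay_f_iter ha g hint n k
    refine ⟨C, fun x => ?_⟩
    rw [norm_iteratedFDeriv_eq_norm_iteratedDeriv, Real.norm_eq_abs]
    exact hC x

end Stmt8Back

open Stmt8Aux Stmt8Back in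
/-- For `a < 0`, the cokernel of `f ↦ f' + ax·f` on the Schwartz space is
one-dimensional: `g` lies in the image iff `∫ exp(ax²/2)·g = 0`, and the
functional `g ↦ ∫ exp(ax²/2)·g` is not identically zero. -/
theorem stmt8 (a : ℝ) (ha : a < 0) :
    (∀ g : SchwartzMap ℝ ℂ,
      (∃ f : SchwartzMap ℝ ℂ,
        ∀ x : ℝ, deriv (⇑f) x + (a : ℂ) * (x : ℂ) * f x = g x) ↔
      ∫ x : ℝ, Complex.exp ((a : ℂ) * (x : ℂ) ^ 2 / 2) * g x = 0) ∧
    ∃ g₀ : SchwartzMap ℝ ℂ,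
      ∫ x : ℝ, Complex.exp ((a : ℂ) * (x : ℂ) ^ 2 / 2) * g₀ x ≠ 0 := by
  constructor
  · intro g
    constructor
    · rintro ⟨f, hf⟩
      exact Stmt8Aux.forward ha f g hf
    · intro hint
      exact ⟨fS ha g hint, fun x => ode_f ha g x⟩
  · exact ⟨g0, integral_g0 ha⟩

end
end

section
/- The pairing between the kernel of D₊(f) = f' + xf and the cokernel of D₋(f) = f' − xf on the Schwartz space, induced by (f₁, f₂) ↦ ∫_ℝ f₁(x) f₂(x) dx, is nondegenerate. Concretely: ker D₊ is spanned by φ(x) = exp(−x²/2), the functional ℓ(g) = ∫ φ g vanishes on the image of D₋, and ℓ(φ) = ∫ exp(−x²) dx ≠ 0. -/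
noncomputable section

open MeasureTheory

private lemma hasDerivAt_gauss (x : ℝ) :
    HasDerivAt (fun y : ℝ => Complex.exp (-(y : ℂ) ^ 2 / 2))
      (-(x : ℂ) * Complex.exp (-(x : ℂ) ^ 2 / 2)) x := by
  have h1 : HasDerivAt (fun y : ℝ => (y : ℂ)) 1 x := by
    simpa using (hasDerivAt_id x).ofReal_comp
  have hsq : HasDerivAt (fun y : ℝ => (y : ℂ) ^ 2) (2 * (x : ℂ)) x := by
    simp only [pow_two]
    exact (h1.mul h1).congr_deriv (by ring)
  have h2 : HasDerivAt (fun y : ℝ => -(y : ℂ) ^ 2 / 2) (-(x : ℂ)) x := by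
    have := hsq.neg.div_const 2
    exact this.congr_deriv (by ring)
  simpa [mul_comm] using h2.cexp

private lemma hasDerivAt_gauss' (x : ℝ) :
    HasDerivAt (fun y : ℝ => Complex.exp ((y : ℂ) ^ 2 / 2))
      ((x : ℂ) * Complex.exp ((x : ℂ) ^ 2 / 2)) x := by
  have h1 : HasDerivAt (fun y : ℝ => (y : ℂ)) 1 x := by
    simpa using (hasDerivAt_id x).ofReal_comp
  have hsq : HasDerivAt (fun y : ℝ => (y : ℂ) ^ 2) (2 * (x : ℂ)) x := by
    simp only [pow_two]
    exact (h1.mul h1).congr_deriv (by ring)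
  have h2 : HasDerivAt (fun y : ℝ => (y : ℂ) ^ 2 / 2) ((x : ℂ)) x := by
    have := hsq.div_const 2
    exact this.congr_deriv (by ring)
  simpa [mul_comm] using h2.cexp

/-- Nondegeneracy of the pairing `(f₁,f₂) ↦ ∫ f₁f₂` between `ker(f ↦ f' + xf)`
and the cokernel of `f ↦ f' − xf` on the Schwartz space:
(1) `ker D₊` is spanned by `φ(x) = exp(−x²/2)`;
(2) the functional `g ↦ ∫ φ·g` vanishes on the image of `D₋`;
(3) `ℓ(φ) = ∫ exp(−x²) dx ≠ 0`. -/
theorem stmt9 :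
    (∀ f : SchwartzMap ℝ ℂ,
      (∀ x : ℝ, deriv (⇑f) x + (x : ℂ) * f x = 0) ↔
      ∃ c : ℂ, ∀ x : ℝ, f x = c * Complex.exp (-(x : ℂ) ^ 2 / 2)) ∧
    (∀ f : SchwartzMap ℝ ℂ,
      ∫ x : ℝ, Complex.exp (-(x : ℂ) ^ 2 / 2) * (deriv (⇑f) x - (x : ℂ) * f x) = 0) ∧
    (∫ x : ℝ, Complex.exp (-(x : ℂ) ^ 2)) ≠ 0 := by
  refine ⟨?_, ?_, ?_⟩
  · intro f
    constructor
    · intro hf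
      refine ⟨f 0, fun x => ?_⟩
      have hdf : ∀ y : ℝ, HasDerivAt (⇑f) (deriv (⇑f) y) y := fun y =>
        (f.differentiable.differentiableAt).hasDerivAt
      set g : ℝ → ℂ := fun y => f y * Complex.exp ((y : ℂ) ^ 2 / 2) with hg
      have hdg : ∀ y : ℝ, HasDerivAt g 0 y := by
        intro y
        have := (hdf y).mul (hasDerivAt_gauss' y)
        have hz : deriv (⇑f) y * Complex.exp ((y : ℂ) ^ 2 / 2)
            + f y * ((y : ℂ) * Complex.exp ((y : ℂ) ^ 2 / 2)) = 0 := by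
          have := hf y
          have : (deriv (⇑f) y + (y : ℂ) * f y) * Complex.exp ((y : ℂ) ^ 2 / 2) = 0 := by
            rw [this]; ring
          calc deriv (⇑f) y * Complex.exp ((y : ℂ) ^ 2 / 2)
              + f y * ((y : ℂ) * Complex.exp ((y : ℂ) ^ 2 / 2))
              = (deriv (⇑f) y + (y : ℂ) * f y) * Complex.exp ((y : ℂ) ^ 2 / 2) := by ring
            _ = 0 := this
        rw [← hz]
        exact (hdf y).mul (hasDerivAt_gauss' y)
      have hconst : g x = g 0 := by
        apply is_const_of_deriv_eq_zero
        · exact fun y => (hdg y).differentiableAt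
        · exact fun y => (hdg y).deriv
      have hx : f x * Complex.exp ((x : ℂ) ^ 2 / 2) = f 0 := by
        simpa [hg] using hconst
      have : f x = f 0 * Complex.exp (-(x : ℂ) ^ 2 / 2) := by
        rw [← hx]
        rw [mul_assoc, ← Complex.exp_add]
        have hz : (x:ℂ)^2/2 + -(x:ℂ)^2/2 = 0 := by ring
        rw [hz, Complex.exp_zero, mul_one]
      exact this
    · rintro ⟨c, hc⟩ x
      have hfe : ⇑f = fun y : ℝ => c * Complex.exp (-(y : ℂ) ^ 2 / 2) := funext hc
      have : HasDerivAt (⇑f) (c * (-(x : ℂ) * Complex.exp (-(x : ℂ) ^ 2 / 2))) x := by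
        rw [hfe]; exact (hasDerivAt_gauss x).const_mul c
      rw [this.deriv, hc x]
      ring
  · intro f
    set φ : ℝ → ℂ := fun x => Complex.exp (-(x : ℂ) ^ 2 / 2) with hφ
    set h : ℝ → ℂ := fun x => φ x * f x with hh
    have hdf : ∀ y : ℝ, HasDerivAt (⇑f) (deriv (⇑f) y) y := fun y =>
      (f.differentiable.differentiableAt).hasDerivAt
    have hdh : ∀ x : ℝ, HasDerivAt h (φ x * (deriv (⇑f) x - (x : ℂ) * f x)) x := by
      intro x
      have := (hasDerivAt_gauss x).mul (hdf x)
      exact this.congr_deriv (by simp only [hφ]; ring)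
    -- integrability
    have hφb : ∀ x : ℝ, ‖φ x‖ ≤ 1 := by
      intro x
      simp only [hφ, Complex.norm_exp]
      have : (-(x : ℂ) ^ 2 / 2).re = -(x ^ 2) / 2 := by
        simp [Complex.div_re]; norm_num [← Complex.ofReal_pow]
      rw [this]
      exact Real.exp_le_one_iff.2 (by nlinarith [sq_nonneg x])
    have hφc : Continuous φ := by
      simp only [hφ]
      fun_prop
    have hint1 : Integrable (fun x : ℝ => deriv (⇑f) x - (x : ℂ) * f x) := by
      have h1 : Integrable (deriv (⇑f)) := (SchwartzMap.derivCLM ℝ ℂ f).integrable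
      have h2 : Integrable (fun x : ℝ => (x : ℂ) * f x) := by
        have hb : Integrable (fun x : ℝ => ‖x‖ ^ 1 * ‖f x‖) := f.integrable_pow_mul volume 1
        refine hb.mono' ?_ ?_
        · exact (Complex.continuous_ofReal.mul f.continuous).aestronglyMeasurable
        · filter_upwards with x
          simp [norm_mul]
      exact h1.sub h2
    have hint' : Integrable (fun x : ℝ => φ x * (deriv (⇑f) x - (x : ℂ) * f x)) := by
      refine hint1.bdd_mul hφc.aestronglyMeasurable (Filter.Eventually.of_forall hφb)
    have hinth : Integrable h := by
      refine f.integrable.bdd_mul hφc.aestronglyMeasurable (Filter.Eventually.of_forall hφb)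
    exact integral_eq_zero_of_hasDerivAt_of_integrable hdh hint' hinth
  · have hb : (0:ℝ) < (1 : ℂ).re := by norm_num
    have := integral_gaussian_complex hb
    have heq : (∫ x : ℝ, Complex.exp (-(x : ℂ) ^ 2))
        = ∫ x : ℝ, Complex.exp (-(1:ℂ) * (x:ℂ) ^ 2) := by
      congr 1; funext x; ring_nf
    rw [heq, this]
    simp only [div_one]
    intro hcontra
    rw [Complex.cpow_eq_zero_iff] at hcontra
    exact (Complex.ofReal_ne_zero.2 Real.pi_ne_zero) hcontra.1

end
end

section
/- Let g₁, g₂ ∈ SL(2,ℤ) with lower-left entries c₁, c₂ and with c₁₂ the lower-left entry of g₁g₂, all nonzero. For α₁ ∈ ℤ/c₁, α₂ ∈ ℤ/c₂, α ∈ ℤ/c₁₂, define I(α₁,α₂,α) = { n ∈ ℤ : n ≡ −c₁α + c₁₂α₁ (mod c₁₂c₁), n ≡ c₂d₁₂α − c₁₂d₂α₂ (mod c₁₂c₂) }, where d₂, d₁₂ are the lower-right entries of g₂, g₁g₂. Then every n ∈ I(α₁,α₂,α) satisfies n ≡ −c₁α₂ + d₁c₂α₁ (mod c₁c₂), where d₁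 is the lower-right entry of g₁. -/
/-!
Multiplying the two congruences by `c₂d₁₂` and `c₁` and adding them modulo `c₁₂c₁c₂`
eliminates `α`, because `c₂d₁₂ + c₁ = c₁₂d₂`; cancelling `c₁₂` leaves
`d₂n ≡ c₂d₁₂α₁ − c₁d₂α₂ (mod c₁c₂)`. Multiplying by `a₂` and subtracting `b₂c₂n` (known modulo
`c₁c₂` from the first congruence) recovers `n`, since the bottom row of `g₁ = (g₁g₂)g₂⁻¹`
is `(c₁₂d₂ − d₁₂c₂, d₁₂a₂ − c₁₂b₂)`.
-/

namespace Matrix.SpecialLinearGroup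

variable {R : Type*} [CommRing R]

theorem det_fin_two_coe (g : SpecialLinearGroup (Fin 2) R) :
    g.1 0 0 * g.1 1 1 - g.1 0 1 * g.1 1 0 = 1 := by
  rw [← det_fin_two, det_coe]

theorem apply_one_zero_eq_of_mul (g₁ g₂ : SpecialLinearGroup (Fin 2) R) :
    g₁.1 1 0 = (g₁ * g₂).1 1 0 * g₂.1 1 1 - (g₁ * g₂).1 1 1 * g₂.1 1 0 := by
  simp only [coe_mul, mul_apply, Fin.sum_univ_two]
  linear_combination (-g₁.1 1 0) * det_fin_two_coe g₂

theorem apply_one_one_eq_of_mul (g₁ g₂ : SpecialLinearGroup (Fin 2) R) :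
    g₁.1 1 1 = (g₁ * g₂).1 1 1 * g₂.1 0 0 - (g₁ * g₂).1 1 0 * g₂.1 0 1 := by
  simp only [coe_mul, mul_apply, Fin.sum_univ_two]
  linear_combination (-g₁.1 1 1) * det_fin_two_coe g₂

end Matrix.SpecialLinearGroup

namespace Int

variable {c₁ d₁ a₂ b₂ c₂ d₂ c₁₂ d₁₂ α₁ α₂ α n : ℤ}

theorem mul_modEq_of_index_set (hc₁ : c₁ = c₁₂ * d₂ - d₁₂ * c₂) (h₁₂ : c₁₂ ≠ 0)
    (hn₁ : n ≡ -c₁ * α + c₁₂ * α₁ [ZMOD c₁₂ * c₁])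
    (hn₂ : n ≡ c₂ * d₁₂ * α - c₁₂ * d₂ * α₂ [ZMOD c₁₂ * c₂]) :
    d₂ * n ≡ c₂ * d₁₂ * α₁ - c₁ * d₂ * α₂ [ZMOD c₁ * c₂] := by
  refine ModEq.mul_left_cancel' h₁₂ ?_
  calc c₁₂ * (d₂ * n) = c₂ * d₁₂ * n + c₁ * n := by linear_combination (-n) * hc₁
    _ ≡ c₂ * d₁₂ * (-c₁ * α + c₁₂ * α₁) + c₁ * (c₂ * d₁₂ * α - c₁₂ * d₂ * α₂)
        [ZMOD c₁₂ * (c₁ * c₂)] :=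
      ((hn₁.mul_left' (c := c₂ * d₁₂)).of_dvd ⟨d₁₂, by ring⟩).add
        ((hn₂.mul_left' (c := c₁)).of_dvd ⟨1, by ring⟩)
    _ = c₁₂ * (c₂ * d₁₂ * α₁ - c₁ * d₂ * α₂) := by ring

theorem modEq_of_index_set (hdet : a₂ * d₂ - b₂ * c₂ = 1)
    (hc₁ : c₁ = c₁₂ * d₂ - d₁₂ * c₂) (hd₁ : d₁ = d₁₂ * a₂ - c₁₂ * b₂) (h₁₂ : c₁₂ ≠ 0)
    (hn₁ : n ≡ -c₁ * α + c₁₂ * α₁ [ZMOD c₁₂ * c₁])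
    (hn₂ : n ≡ c₂ * d₁₂ * α - c₁₂ * d₂ * α₂ [ZMOD c₁₂ * c₂]) :
    n ≡ -c₁ * α₂ + d₁ * c₂ * α₁ [ZMOD c₁ * c₂] := by
  have hd₂n := mul_modEq_of_index_set hc₁ h₁₂ hn₁ hn₂
  have hc₂n : c₂ * n ≡ c₂ * (-c₁ * α + c₁₂ * α₁) [ZMOD c₁ * c₂] :=
    mul_comm c₂ c₁ ▸ (hn₁.of_mul_left c₁₂).mul_left'
  calc n = a₂ * (d₂ * n) - b₂ * (c₂ * n) := by linear_combination (-n) * hdet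
    _ ≡ a₂ * (c₂ * d₁₂ * α₁ - c₁ * d₂ * α₂) - b₂ * (c₂ * (-c₁ * α + c₁₂ * α₁))
        [ZMOD c₁ * c₂] := (hd₂n.mul_left a₂).sub (hc₂n.mul_left b₂)
    _ = -c₁ * α₂ + d₁ * c₂ * α₁ + c₁ * c₂ * (b₂ * α - b₂ * α₂) := by
      linear_combination (-(c₂ * α₁)) * hd₁ - (c₁ * α₂) * hdet
    _ ≡ -c₁ * α₂ + d₁ * c₂ * α₁ [ZMOD c₁ * c₂] := modEq_add_fac_self

end Int

theorem stmt12_general (g₁ g₂ : Matrix.SpecialLinearGroup (Fin 2) ℤ)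
    (c₁ d₁ c₂ d₂ c₁₂ d₁₂ : ℤ)
    (hc₁ : c₁ = g₁.1 1 0) (hd₁ : d₁ = g₁.1 1 1)
    (hc₂ : c₂ = g₂.1 1 0) (hd₂ : d₂ = g₂.1 1 1)
    (hc₁₂ : c₁₂ = (g₁ * g₂).1 1 0) (hd₁₂ : d₁₂ = (g₁ * g₂).1 1 1)
    (h₁₂ : c₁₂ ≠ 0)
    (α₁ α₂ α n : ℤ)
    (hn₁ : n ≡ -c₁ * α + c₁₂ * α₁ [ZMOD c₁₂ * c₁])
    (hn₂ : n ≡ c₂ * d₁₂ * α - c₁₂ * d₂ * α₂ [ZMOD c₁₂ * c₂]) :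
    n ≡ -c₁ * α₂ + d₁ * c₂ * α₁ [ZMOD c₁ * c₂] := by
  subst hc₁ hd₁ hc₂ hd₂ hc₁₂ hd₁₂
  exact Int.modEq_of_index_set g₂.det_fin_two_coe (g₁.apply_one_zero_eq_of_mul g₂)
    (g₁.apply_one_one_eq_of_mul g₂) h₁₂ hn₁ hn₂

/-- Lemma on the index sets `I_{g₁,g₂}(α₁,α₂,α)`: if
`n ≡ −c₁α + c₁₂α₁ (mod c₁₂c₁)` and `n ≡ c₂d₁₂α − c₁₂d₂α₂ (mod c₁₂c₂)`, then
`n ≡ −c₁α₂ + d₁c₂α₁ (mod c₁c₂)`.  Here `cᵢ, dᵢ` (resp. `c₁₂, d₁₂`) are the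
bottom-row entries of `gᵢ` (resp. of `g₁g₂`), and `α₁, α₂, α` are integer
representatives of classes modulo `c₁`, `c₂`, `c₁₂`. -/
theorem stmt12 (g₁ g₂ : Matrix.SpecialLinearGroup (Fin 2) ℤ)
    (c₁ d₁ c₂ d₂ c₁₂ d₁₂ : ℤ)
    (hc₁ : c₁ = g₁.1 1 0) (hd₁ : d₁ = g₁.1 1 1)
    (hc₂ : c₂ = g₂.1 1 0) (hd₂ : d₂ = g₂.1 1 1)
    (hc₁₂ : c₁₂ = (g₁ * g₂).1 1 0) (hd₁₂ : d₁₂ = (g₁ * g₂).1 1 1)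
    (h₁ : c₁ ≠ 0) (h₂ : c₂ ≠ 0) (h₁₂ : c₁₂ ≠ 0)
    (α₁ α₂ α n : ℤ)
    (hn₁ : n ≡ -c₁ * α + c₁₂ * α₁ [ZMOD c₁₂ * c₁])
    (hn₂ : n ≡ c₂ * d₁₂ * α - c₁₂ * d₂ * α₂ [ZMOD c₁₂ * c₂]) :
    n ≡ -c₁ * α₂ + d₁ * c₂ * α₁ [ZMOD c₁ * c₂] :=
  stmt12_general g₁ g₂ c₁ d₁ c₂ d₂ c₁₂ d₁₂ hc₁ hd₁ hc₂ hd₂ hc₁₂ hd₁₂ h₁₂ α₁ α₂ α n hn₁ hn₂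
end
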